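/- Let X be a finite data domain, R a finite range, and S a score function on datasets D ∈ X^n and r ∈ R with sensitivity Δ_S = max over neighboring datasets D, D′ and r ∈ R of |S(D,r) − S(D′,r)| > 0. For ρ > 0, the exponential mechanism M_E(D, S, R, ρ), which outputs r ∈ R with probability proportional to exp(ρ·S(D,r)/(2Δ_S)), satisfies (ρ²/2)-zCDP: for all neighboring datasets D, D′ and all α > 1, D_α(M_E(D) ‖ M_E(D′)) ≤ (ρ²/2)·α. -/

import Mathlib

/-!
Shifting every score by at most `Δ` moves every exponent by at most `ρ / 2`, so the output
distributions `P`, `Q` on neighbouring datasets satisfy `e^{-ρ} ≤ P r / Q r ≤ e^ρ`: the mechanism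
is `ρ`-differentially private. Pure `ε`-DP implies `(ε² / 2)`-zCDP: bounding the convex
`(P / Q) ^ α` by its chord between `e^{-ε}` and `e^ε` and summing against `Q` bounds
`∑ P ^ α Q ^ (1 - α)` by the chord's value at `1`, which is `cosh c / cosh p` with `c = εα - ε/2`,
`p = ε/2`; as `(log cosh)' = tanh y ≤ y`, this is at most
`exp ((c² - p²) / 2) = exp (α (α - 1) ε² / 2)`.
-/

open Real Set Finset

namespace Real

lemma sinh_le_mul_cosh {x : ℝ} (hx : 0 ≤ x) : sinh x ≤ x * cosh x := by
  rcases hx.eq_or_lt with rfl | hx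
  · simp
  obtain ⟨ξ, hξ, hslope⟩ := exists_deriv_eq_slope sinh hx continuous_sinh.continuousOn
    differentiable_sinh.differentiableOn
  rw [deriv_sinh, sinh_zero, sub_zero, sub_zero, eq_div_iff hx.ne'] at hslope
  rw [← hslope, mul_comm]
  gcongr
  exact cosh_le_cosh.2 (by rw [abs_of_pos hξ.1, abs_of_pos hx]; exact hξ.2.le)

lemma cosh_le_cosh_mul_exp {p c : ℝ} (hp : 0 ≤ p) (hpc : p ≤ c) :
    cosh c ≤ cosh p * exp ((c ^ 2 - p ^ 2) / 2) := by
  have hmono : MonotoneOn (fun y ↦ y ^ 2 / 2 - log (cosh y)) (Ici 0) := by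
    refine monotoneOn_of_hasDerivWithinAt_nonneg (f' := fun y ↦ y - sinh y / cosh y)
      (convex_Ici 0) ?_ (fun y _ ↦ ?_) (fun y hy ↦ ?_)
    · exact ((continuous_pow 2).div_const 2 |>.sub
        (continuous_cosh.log fun y ↦ (cosh_pos y).ne')).continuousOn
    · refine HasDerivAt.hasDerivWithinAt ?_
      refine (((hasDerivAt_pow 2 y).div_const 2).sub
        ((hasDerivAt_cosh y).log (cosh_pos y).ne')).congr_deriv ?_
      push_cast
      ring
    · rw [interior_Ici, Set.mem_Ioi] at hy
      rw [sub_nonneg, div_le_iff₀ (cosh_pos y)]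
      exact sinh_le_mul_cosh hy.le
  have hlog := hmono hp (hp.trans hpc) hpc
  dsimp only at hlog
  calc cosh c = exp (log (cosh c)) := (exp_log (cosh_pos c)).symm
    _ ≤ exp (log (cosh p) + (c ^ 2 - p ^ 2) / 2) := exp_le_exp.2 (by linarith)
    _ = cosh p * exp ((c ^ 2 - p ^ 2) / 2) := by rw [exp_add, exp_log (cosh_pos p)]

lemma exp_chord_le {ε α : ℝ} (hε : 0 ≤ ε) (hα : 1 ≤ α) :
    (exp ε - 1) * exp (-ε) ^ α + (1 - exp (-ε)) * exp ε ^ α ≤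
      (exp ε - exp (-ε)) * exp ((α - 1) * (ε ^ 2 / 2 * α)) := by
  set p := ε / 2
  set c := ε * α - ε / 2
  have hε : ε = p + p := by ring
  have hεα : ε * α = c + p := by ring
  have hnum :
      (exp ε - 1) * exp (-ε) ^ α + (1 - exp (-ε)) * exp ε ^ α = 4 * sinh p * cosh c := by
    rw [← exp_mul, ← exp_mul, neg_mul, hεα, sinh_eq, cosh_eq, hε]
    simp only [exp_add, exp_neg]
    field_simp
    ring
  have hden : exp ε - exp (-ε) = 4 * sinh p * cosh p := by
    rw [sinh_eq, cosh_eq, hε]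
    simp only [exp_add, exp_neg]
    field_simp
    ring
  have hexp : (α - 1) * (ε ^ 2 / 2 * α) = (c ^ 2 - p ^ 2) / 2 := by ring
  rw [hnum, hden, hexp, mul_assoc _ (cosh p)]
  have : 0 ≤ sinh p := sinh_nonneg_iff.2 (by positivity)
  gcongr
  exact cosh_le_cosh_mul_exp (by positivity) (by nlinarith)

end Real

lemma ConvexOn.sub_mul_le_chord {s : Set ℝ} {f : ℝ → ℝ} (hf : ConvexOn ℝ s f) {x y z : ℝ}
    (hx : x ∈ s) (hz : z ∈ s) (hxy : x ≤ y) (hyz : y ≤ z) :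
    (z - x) * f y ≤ (z - y) * f x + (y - x) * f z := by
  rcases hxy.eq_or_lt with rfl | hxy
  · simp
  rcases hyz.eq_or_lt with rfl | hyz
  · simp
  exact hf.secant_mono_aux1 hx hz hxy hyz

lemma Real.sub_mul_rpow_mul_rpow_one_sub_le {m M p q α : ℝ} (hm : 0 ≤ m) (hq : 0 < q)
    (hα : 1 ≤ α) (hmp : m * q ≤ p) (hpM : p ≤ M * q) :
    (M - m) * (p ^ α * q ^ (1 - α)) ≤ (M * q - p) * m ^ α + (p - m * q) * M ^ α := by
  obtain ⟨x, rfl⟩ : ∃ x, p = q * x := ⟨p / q, by field_simp⟩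
  have hmx : m ≤ x := le_of_mul_le_mul_left (by linarith) hq
  have hxM : x ≤ M := le_of_mul_le_mul_left (by linarith) hq
  have hchord := (convexOn_rpow hα).sub_mul_le_chord hm (hm.trans (hmx.trans hxM)) hmx hxM
  have hpq : (q * x) ^ α * q ^ (1 - α) = q * x ^ α := by
    rw [mul_rpow hq.le (hm.trans hmx), rpow_sub hq, rpow_one]
    field_simp
  rw [hpq]
  linear_combination mul_le_mul_of_nonneg_left hchord hq.le

section

variable {ι : Type*} [Fintype ι]

noncomputable def renyiDiv (α : ℝ) (P Q : ι → ℝ) : ℝ :=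
  (α - 1)⁻¹ * log (∑ i, P i ^ α * Q i ^ (1 - α))

theorem sum_rpow_mul_rpow_one_sub_le {P Q : ι → ℝ} {ε α : ℝ} (hε : 0 < ε) (hα : 1 ≤ α)
    (hQ : ∀ i, 0 < Q i) (hP1 : ∑ i, P i = 1) (hQ1 : ∑ i, Q i = 1)
    (hPQ : ∀ i, P i ≤ exp ε * Q i) (hQP : ∀ i, Q i ≤ exp ε * P i) :
    ∑ i, P i ^ α * Q i ^ (1 - α) ≤ exp ((α - 1) * (ε ^ 2 / 2 * α)) := by
  have hgap : 0 < exp ε - exp (-ε) := sub_pos.2 (exp_lt_exp.2 (by linarith))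
  have hlower : ∀ i, exp (-ε) * Q i ≤ P i := fun i ↦ by
    rw [exp_neg, inv_mul_le_iff₀ (exp_pos ε)]
    exact hQP i
  refine le_of_mul_le_mul_left ?_ hgap
  calc (exp ε - exp (-ε)) * ∑ i, P i ^ α * Q i ^ (1 - α)
      ≤ ∑ i, ((exp ε * Q i - P i) * exp (-ε) ^ α + (P i - exp (-ε) * Q i) * exp ε ^ α) := by
        rw [mul_sum]
        exact sum_le_sum fun i _ ↦
          sub_mul_rpow_mul_rpow_one_sub_le (exp_pos _).le (hQ i) hα (hlower i) (hPQ i)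
    _ = (exp ε - 1) * exp (-ε) ^ α + (1 - exp (-ε)) * exp ε ^ α := by
        simp only [sum_add_distrib, ← sum_mul, sum_sub_distrib, ← mul_sum, hP1, hQ1, mul_one]
    _ ≤ (exp ε - exp (-ε)) * exp ((α - 1) * (ε ^ 2 / 2 * α)) := exp_chord_le hε.le hα

theorem renyiDiv_le {P Q : ι → ℝ} {ε α : ℝ} (hε : 0 < ε) (hα : 1 < α)
    (hQ : ∀ i, 0 < Q i) (hP1 : ∑ i, P i = 1) (hQ1 : ∑ i, Q i = 1)
    (hPQ : ∀ i, P i ≤ exp ε * Q i) (hQP : ∀ i, Q i ≤ exp ε * P i) :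
    renyiDiv α P Q ≤ ε ^ 2 / 2 * α := by
  have hP : ∀ i, 0 < P i := fun i ↦ pos_of_mul_pos_right ((hQ i).trans_le (hQP i)) (exp_pos ε).le
  have hsum_pos : 0 < ∑ i, P i ^ α * Q i ^ (1 - α) := by
    refine sum_pos (fun i _ ↦ mul_pos (rpow_pos_of_pos (hP i) α) (rpow_pos_of_pos (hQ i) _)) ?_
    exact nonempty_of_sum_ne_zero (hP1 ▸ one_ne_zero)
  have hlog := (log_le_iff_le_exp hsum_pos).2
    (sum_rpow_mul_rpow_one_sub_le hε hα.le hQ hP1 hQ1 hPQ hQP)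
  rw [renyiDiv, inv_mul_le_iff₀ (sub_pos.2 hα)]
  exact hlog

noncomputable def gibbs (u : ι → ℝ) (i : ι) : ℝ := exp (u i) / ∑ j, exp (u j)

lemma gibbs_pos (u : ι → ℝ) (i : ι) : 0 < gibbs u i :=
  div_pos (exp_pos _) (sum_pos (fun _ _ ↦ exp_pos _) ⟨i, mem_univ i⟩)

lemma sum_gibbs [Nonempty ι] (u : ι → ℝ) : ∑ i, gibbs u i = 1 := by
  simp only [gibbs, ← sum_div]
  exact div_self (sum_pos (fun _ _ ↦ exp_pos _) univ_nonempty).ne'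

lemma gibbs_le_exp_mul_gibbs {u v : ι → ℝ} {ε : ℝ} (huv : ∀ i, |u i - v i| ≤ ε / 2) (i : ι) :
    gibbs u i ≤ exp ε * gibbs v i := by
  have hle : ∀ j, exp (u j) ≤ exp (ε / 2) * exp (v j) := fun j ↦ by
    rw [← exp_add]; exact exp_le_exp.2 (by linarith [(abs_le.1 (huv j)).2])
  have hge : ∀ j, exp (v j) ≤ exp (ε / 2) * exp (u j) := fun j ↦ by
    rw [← exp_add]; exact exp_le_exp.2 (by linarith [(abs_le.1 (huv j)).1])
  have hZu : 0 < ∑ j, exp (u j) := sum_pos (fun _ _ ↦ exp_pos _) ⟨i, mem_univ i⟩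
  have hZv : ∑ j, exp (v j) ≤ exp (ε / 2) * ∑ j, exp (u j) := by
    rw [mul_sum]; exact sum_le_sum fun j _ ↦ hge j
  have hexp : exp (ε / 2) * exp (ε / 2) = exp ε := by rw [← exp_add, add_halves]
  have hZv_pos : 0 < ∑ j, exp (v j) := sum_pos (fun _ _ ↦ exp_pos _) ⟨i, mem_univ i⟩
  rw [gibbs, gibbs, ← mul_div_assoc, div_le_div_iff₀ hZu hZv_pos]
  calc exp (u i) * ∑ j, exp (v j) ≤ exp (ε / 2) * exp (v i) * (exp (ε / 2) * ∑ j, exp (u j)) :=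
        mul_le_mul (hle i) hZv (sum_nonneg fun _ _ ↦ (exp_pos _).le) (by positivity)
    _ = exp ε * exp (v i) * ∑ j, exp (u j) := by
        rw [← hexp]; ring

end

lemma abs_mul_div_sub_mul_div_le_half {ρ s s' Δ : ℝ} (hρ : 0 ≤ ρ) (hss' : |s - s'| ≤ Δ) :
    |ρ * s / (2 * Δ) - ρ * s' / (2 * Δ)| ≤ ρ / 2 := by
  have hΔ : 0 ≤ Δ := (abs_nonneg _).trans hss'
  rw [show ρ * s / (2 * Δ) - ρ * s' / (2 * Δ) = ρ / 2 * ((s - s') / Δ) by ring, abs_mul,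
    abs_of_nonneg (by positivity : 0 ≤ ρ / 2), abs_div, abs_of_nonneg hΔ]
  exact mul_le_of_le_one_right (by positivity) (div_le_one_of_le₀ hss' hΔ)

theorem exponential_mechanism_zCDP_general
    {X R : Type*} [Fintype R] [Nonempty R]
    (n : ℕ) (ρ : ℝ) (hρ : 0 < ρ)
    (S : (Fin n → X) → R → ℝ) (Δ : ℝ)
    -- `Δ` is the sensitivity of `S` over neighboring datasets
    (hsens : ∀ D D' : Fin n → X, (∃ i, ∀ j, j ≠ i → D j = D' j) →
      ∀ r, |S D r - S D' r| ≤ Δ)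
    -- the exponential mechanism
    (EM : (Fin n → X) → R → ℝ)
    (hEM : ∀ D r, EM D r =
      Real.exp (ρ * S D r / (2 * Δ)) / ∑ r', Real.exp (ρ * S D r' / (2 * Δ))) :
    -- `(ρ²/2)`-zCDP
    ∀ D D' : Fin n → X, (∃ i, ∀ j, j ≠ i → D j = D' j) →
      ∀ α : ℝ, 1 < α →
        (α - 1)⁻¹ * Real.log (∑ r, EM D r ^ α * EM D' r ^ (1 - α)) ≤
          ρ ^ 2 / 2 * α := by
  intro D D' hDD' α hα
  set u := fun r ↦ ρ * S D r / (2 * Δ)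
  set v := fun r ↦ ρ * S D' r / (2 * Δ)
  have huv : ∀ r, |u r - v r| ≤ ρ / 2 := fun r ↦
    abs_mul_div_sub_mul_div_le_half hρ.le (hsens D D' hDD' r)
  have hvu : ∀ r, |v r - u r| ≤ ρ / 2 := fun r ↦ abs_sub_comm (u r) (v r) ▸ huv r
  rw [show EM D = gibbs u from funext (hEM D), show EM D' = gibbs v from funext (hEM D')]
  exact renyiDiv_le hρ hα (gibbs_pos v) (sum_gibbs u) (sum_gibbs v)
    (gibbs_le_exp_mul_gibbs huv) (gibbs_le_exp_mul_gibbs hvu)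

/-- (The exponential mechanism satisfies `(ρ²/2)`-zCDP.)
For a score function `S` of sensitivity `Δ_S > 0`, the exponential mechanism
`M_E(D, S, R, ρ)`, which outputs `r ∈ R` with probability proportional to
`exp(ρ·S(D,r)/(2Δ_S))`, satisfies `(ρ²/2)`-zCDP. -/
theorem exponential_mechanism_zCDP
    {X R : Type*} [Fintype X] [Fintype R] [Nonempty R]
    (n : ℕ) (hn : 1 ≤ n) (ρ : ℝ) (hρ : 0 < ρ)
    (S : (Fin n → X) → R → ℝ) (Δ : ℝ) (hΔ : 0 < Δ)
    -- `Δ` is the sensitivity of `S` over neighboring datasets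
    (hsens : ∀ D D' : Fin n → X, (∃ i, ∀ j, j ≠ i → D j = D' j) →
      ∀ r, |S D r - S D' r| ≤ Δ)
    -- the exponential mechanism
    (EM : (Fin n → X) → R → ℝ)
    (hEM : ∀ D r, EM D r =
      Real.exp (ρ * S D r / (2 * Δ)) / ∑ r', Real.exp (ρ * S D r' / (2 * Δ))) :
    -- `(ρ²/2)`-zCDP
    ∀ D D' : Fin n → X, (∃ i, ∀ j, j ≠ i → D j = D' j) →
      ∀ α : ℝ, 1 < α →
        (α - 1)⁻¹ * Real.log (∑ r, EM D r ^ α * EM D' r ^ (1 - α)) ≤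
          ρ ^ 2 / 2 * α :=
  exponential_mechanism_zCDP_general n ρ hρ S Δ hsens EM hEM
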